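/- Let Γ = Cay(V, S) be a cubelike graph on V = 𝔽₂^m with 0 ∉ S, let a, b, c, d ∈ V with a + b ∈ S, c + d ∈ S, b ≠ c, a ≠ d, and fix any x₀ ∈ Ω₊. Then Γ has PEST from the edge (a,b) to the edge (c,d) at some time t > 0 if and only if both of the following hold: (1) a + b + c + d = 0; (2) there is an integer ρ such that v₂(λ_{x₀} − λ_x) = ρ for every x ∈ Ω₋, and v₂(λ_{x₀} − λ_y) ≥ ρ + 1 for every y ∈ Ω₊. -/

import Mathlib

open Matrix Finset

noncomputable section

/-- The adjacency matrix of the Cayley (cubelike) graph `Cay(G, S)`. -/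
def adjMatrix {G : Type*} [AddCommGroup G] [Fintype G] [DecidableEq G]
    (S : Finset G) : Matrix G G ℂ :=
  fun u v => if u + v ∈ S then 1 else 0

/-- The transfer matrix `H(t) = exp(i t A)`. -/
def transferMatrix {G : Type*} [AddCommGroup G] [Fintype G] [DecidableEq G]
    (S : Finset G) (t : ℝ) : Matrix G G ℂ :=
  NormedSpace.exp (Complex.I • ((t : ℂ) • adjMatrix S))

/-- The standard basis vector `e_a` of `ℂ^V`. -/
def stdBasis {G : Type*} [DecidableEq G] (a : G) : G → ℂ :=
  fun v => if v = a then 1 else 0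

/-- Perfect edge state transfer from the edge `(a,b)` to the edge `(c,d)` at time `t`:
`|(1/2)(e_c - e_d)ᵀ H(t)(e_a - e_b)|² = 1`. -/
def hasPEST {G : Type*} [AddCommGroup G] [Fintype G] [DecidableEq G]
    (S : Finset G) (a b c d : G) (t : ℝ) : Prop :=
  ‖(1 / 2 : ℂ) * dotProduct (stdBasis c - stdBasis d)
      (transferMatrix S t *ᵥ (stdBasis a - stdBasis b))‖ ^ 2 = 1

/-- The eigenvalue `λ_x = ∑_{s ∈ S} (-1)^{x·s}` of a cubelike graph. -/
def lam {m : ℕ} (S : Finset (Fin m → ZMod 2)) (x : Fin m → ZMod 2) : ℤ :=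
  ∑ s ∈ S, (-1) ^ (x ⬝ᵥ s).val

/-- The 2-adic valuation of an integer, with `v₂(0) = ∞`. -/
def v2 (n : ℤ) : WithTop ℤ :=
  if n = 0 then ⊤ else ((padicValInt 2 n : ℤ) : WithTop ℤ)

/-!
The characters `χ_w x = (-1)^(w ⬝ᵥ x)` diagonalise every cubelike graph, so
`H(t)_{uv} = 2⁻ᵐ ∑ₓ exp(i t λₓ) χₓ(u + v)` and the PEST amplitude is
`2⁻⁽ᵐ⁺¹⁾ ∑ₓ exp(i t λₓ) B x` with `B = χ_{c+a} + χ_{d+b} - χ_{c+b} - χ_{d+a}`.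

If `a + b + c + d ≠ 0` these four characters are distinct, so `∑ B² = 4 · 2ᵐ` by orthogonality;
as `4 |B| ≤ B² + 4`, with slack at `x = 0`, we get `∑ |B| < 2ᵐ⁺¹` and the amplitude has modulus
`< 1`. If `a + b + c + d = 0`, then `B = 4 χ_{c+a}` on `Ω = Ω₊ ∪ Ω₋` and `B = 0` off it, and
`|Ω| = 2ᵐ⁻¹`: the amplitude is the mean of the unit numbers `exp(i t λₓ) χ_{c+a}(x)` over `Ω`, of
modulus `1` iff they all agree, i.e. iff `exp(i t (λ_{x₀} - λₓ))` is `-1` on `Ω₋` and `1` on `Ω₊`.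
With `t = π s` this says that `s (λ_{x₀} - λₓ)` is an odd integer on `Ω₋` and an even one on `Ω₊`,
which is solvable iff the 2-adic valuations behave as stated (take `s = 2^(-ρ)`).
-/

namespace Cubelike

open Complex
open scoped Real

abbrev V (m : ℕ) := Fin m → ZMod 2

variable {m : ℕ}

lemma neg_eq_self (v : V m) : -v = v := funext fun k => ZMod.neg_eq_self_mod_two (v k)

lemma add_self (v : V m) : v + v = 0 := by
  nth_rw 2 [← neg_eq_self v]
  exact add_neg_cancel v

lemma add_eq_zero_iff_eq {u v : V m} : u + v = 0 ↔ u = v := by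
  rw [add_eq_zero_iff_eq_neg, neg_eq_self]

lemma zmod_two_eq_zero_or_eq_one (z : ZMod 2) : z = 0 ∨ z = 1 := by
  revert z; decide

def chi (w : V m) : AddChar (V m) ℤ where
  toFun x := (-1) ^ (w ⬝ᵥ x).val
  map_zero_eq_one' := by simp
  map_add_eq_mul' x y := by
    rw [dotProduct_add, ZMod.val_add, ← neg_one_pow_eq_pow_mod_two, pow_add]

lemma chi_apply (w x : V m) : chi w x = (-1) ^ (w ⬝ᵥ x).val := rfl

lemma chi_comm (w x : V m) : chi w x = chi x w := by
  rw [chi_apply, chi_apply, dotProduct_comm]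

lemma chi_add_left (w w' x : V m) : chi (w + w') x = chi w x * chi w' x := by
  rw [chi_comm, AddChar.map_add_eq_mul, chi_comm, chi_comm x]

lemma chi_mul_self (w x : V m) : chi w x * chi w x = 1 := by
  rw [chi_apply, ← mul_pow, neg_one_mul, neg_neg, one_pow]

lemma abs_chi (w x : V m) : |chi w x| = 1 := by
  rw [chi_apply, abs_pow, abs_neg, abs_one, one_pow]

lemma chi_of_dotProduct_eq_zero {w x : V m} (h : w ⬝ᵥ x = 0) : chi w x = 1 := by
  simp [chi_apply, h]

lemma chi_of_dotProduct_eq_one {w x : V m} (h : w ⬝ᵥ x = 1) : chi w x = -1 := by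
  simp [chi_apply, h, ZMod.val_one]

lemma one_sub_chi (w x : V m) : 1 - chi w x = if w ⬝ᵥ x = 1 then 2 else 0 := by
  rcases zmod_two_eq_zero_or_eq_one (w ⬝ᵥ x) with h | h
  · simp [chi_of_dotProduct_eq_zero h, h]
  · simp [chi_of_dotProduct_eq_one h, h]

lemma chi_eq_one_iff {w : V m} : chi w = 1 ↔ w = 0 := by
  refine ⟨fun h => funext fun j => ?_, fun h => by ext x; simp [h, chi_apply]⟩
  have hj := DFunLike.congr_fun h (Pi.single j 1)
  rw [chi_apply, dotProduct_single, mul_one, AddChar.one_apply] at hj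
  rcases zmod_two_eq_zero_or_eq_one (w j) with h' | h'
  · exact h'
  · simp [h', ZMod.val_one] at hj

lemma sum_chi_of_ne_zero {w : V m} (hw : w ≠ 0) : ∑ x, chi w x = 0 :=
  AddChar.sum_eq_zero_of_ne_one (chi_eq_one_iff.not.2 hw)

lemma card_V : Fintype.card (V m) = 2 ^ m := by simp

lemma sum_chi (w : V m) : ∑ x, chi w x = if w = 0 then 2 ^ m else 0 := by
  split_ifs with hw
  · simp [hw, chi_eq_one_iff.2 rfl]
  · exact sum_chi_of_ne_zero hw

lemma lam_eq_sum_chi (S : Finset (V m)) (x : V m) : lam S x = ∑ s ∈ S, chi s x := by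
  simp only [lam, chi_comm _ x]; rfl

def charMatrix (m : ℕ) : Matrix (V m) (V m) ℂ := of fun u x => (chi u x : ℂ)

lemma charMatrix_mul_self : charMatrix m * charMatrix m = (2 ^ m : ℂ) • 1 := by
  ext u v
  have h : ∑ x, (chi u x : ℂ) * chi x v = ((∑ x, chi (u + v) x : ℤ) : ℂ) := by
    push_cast
    exact Finset.sum_congr rfl fun x _ => by rw [chi_comm x v, chi_add_left, Int.cast_mul]
  simp only [charMatrix, mul_apply, of_apply, Matrix.smul_apply, Matrix.one_apply, smul_eq_mul,
    h, sum_chi, add_eq_zero_iff_eq]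
  split_ifs <;> simp

lemma charMatrix_mul_inv_smul : charMatrix m * ((2 ^ m : ℂ)⁻¹ • charMatrix m) = 1 := by
  rw [Matrix.mul_smul, charMatrix_mul_self, smul_smul, inv_mul_cancel₀ (pow_ne_zero _ two_ne_zero),
    one_smul]

lemma adjMatrix_mul_charMatrix (S : Finset (V m)) :
    adjMatrix S * charMatrix m = charMatrix m * diagonal (fun x => (lam S x : ℂ)) := by
  ext u x
  rw [mul_apply, mul_diagonal, ← Fintype.sum_equiv (Equiv.addLeft u) (fun s => _) _ fun _ => rfl]
  simp only [adjMatrix, charMatrix, of_apply, Equiv.coe_addLeft, ← add_assoc, add_self, zero_add,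
    chi_add_left, lam_eq_sum_chi, Int.cast_mul, Int.cast_sum, boole_mul, Finset.mul_sum]
  rw [Finset.sum_ite_mem, Finset.univ_inter]

lemma transferMatrix_eq (S : Finset (V m)) (t : ℝ) :
    transferMatrix S t =
      charMatrix m * diagonal (fun x => exp (↑(t * lam S x) * I)) * (charMatrix m)⁻¹ := by
  have hdet : IsUnit (charMatrix m).det := isUnit_det_of_right_inverse charMatrix_mul_inv_smul
  have hA : adjMatrix S = charMatrix m * diagonal (fun x => (lam S x : ℂ)) * (charMatrix m)⁻¹ := by
    rw [← adjMatrix_mul_charMatrix, mul_nonsing_inv_cancel_right _ _ hdet]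
  rw [transferMatrix, hA, smul_smul, ← Matrix.smul_mul, ← Matrix.mul_smul, ← diagonal_smul,
    exp_conj _ _ ((isUnit_iff_isUnit_det _).2 hdet), exp_diagonal]
  congr 3
  ext x
  rw [Pi.coe_exp, ← Complex.exp_eq_exp_ℂ, Pi.smul_apply, smul_eq_mul]
  push_cast; ring_nf

lemma transferMatrix_apply (S : Finset (V m)) (t : ℝ) (u v : V m) :
    transferMatrix S t u v =
      (2 ^ m : ℂ)⁻¹ * ∑ x, exp (↑(t * lam S x) * I) * chi (u + v) x := by
  rw [transferMatrix_eq, inv_eq_right_inv charMatrix_mul_inv_smul, Matrix.mul_smul,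
    Matrix.smul_apply, smul_eq_mul, mul_apply]
  simp only [mul_diagonal, charMatrix, of_apply, chi_add_left]
  congr 1
  refine Finset.sum_congr rfl fun x _ => ?_
  rw [chi_comm x v]
  push_cast; ring

lemma sub_stdBasis_dotProduct_mulVec {G : Type*} [Fintype G] [DecidableEq G] (M : Matrix G G ℂ)
    (a b c d : G) :
    (stdBasis c - stdBasis d) ⬝ᵥ (M *ᵥ (stdBasis a - stdBasis b)) =
      M c a - M c b - M d a + M d b := by
  simp [_root_.stdBasis, dotProduct, mulVec, sub_mul, mul_sub, Finset.sum_sub_distrib]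
  ring

section EdgeAmplitude

variable {G : Type*} [AddCommGroup G] [Fintype G] [DecidableEq G]

def edgeAmplitude (S : Finset G) (a b c d : G) (t : ℝ) : ℂ :=
  (1 / 2 : ℂ) * dotProduct (stdBasis c - stdBasis d)
    (transferMatrix S t *ᵥ (stdBasis a - stdBasis b))

lemma hasPEST_iff_norm_edgeAmplitude {S : Finset G} {a b c d : G} {t : ℝ} :
    hasPEST S a b c d t ↔ ‖edgeAmplitude S a b c d t‖ = 1 :=
  pow_eq_one_iff_of_nonneg (norm_nonneg _) two_ne_zero

end EdgeAmplitude

lemma edgeAmplitude_eq (S : Finset (V m)) (a b c d : V m) (t : ℝ) :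
    edgeAmplitude S a b c d t = (2 ^ (m + 1) : ℂ)⁻¹ * ∑ x, exp (↑(t * lam S x) * I) *
      ((chi (c + a) x + chi (d + b) x - chi (c + b) x - chi (d + a) x : ℤ) : ℂ) := by
  rw [edgeAmplitude, sub_stdBasis_dotProduct_mulVec]
  simp only [transferMatrix_apply, ← mul_sub, ← mul_add, ← Finset.sum_sub_distrib,
    ← Finset.sum_add_distrib, Finset.mul_sum]
  refine Finset.sum_congr rfl fun x _ => ?_
  push_cast; ring

lemma sum_abs_chi_combination_lt {w₁ w₂ w₃ w₄ : V m} (h₁₂ : w₁ + w₂ ≠ 0) (h₁₃ : w₁ + w₃ ≠ 0)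
    (h₁₄ : w₁ + w₄ ≠ 0) (h₂₃ : w₂ + w₃ ≠ 0) (h₂₄ : w₂ + w₄ ≠ 0) (h₃₄ : w₃ + w₄ ≠ 0) :
    ∑ x, |chi w₁ x + chi w₂ x - chi w₃ x - chi w₄ x| < 2 ^ (m + 1) := by
  set B := fun x => chi w₁ x + chi w₂ x - chi w₃ x - chi w₄ x
  have hsq : ∀ x, B x ^ 2 = 4 + 2 * (chi (w₁ + w₂) x + chi (w₃ + w₄) x - chi (w₁ + w₃) x
      - chi (w₁ + w₄) x - chi (w₂ + w₃) x - chi (w₂ + w₄) x) := fun x => by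
    simp only [B, chi_add_left]
    linear_combination chi_mul_self w₁ x + chi_mul_self w₂ x + chi_mul_self w₃ x +
      chi_mul_self w₄ x
  have hsum_sq : ∑ x, B x ^ 2 = 4 * 2 ^ m := by
    simp only [hsq, Finset.sum_add_distrib, Finset.sum_sub_distrib, ← Finset.mul_sum,
      sum_chi_of_ne_zero h₁₂, sum_chi_of_ne_zero h₁₃, sum_chi_of_ne_zero h₁₄,
      sum_chi_of_ne_zero h₂₃, sum_chi_of_ne_zero h₂₄, sum_chi_of_ne_zero h₃₄, Finset.sum_const,
      Finset.card_univ, card_V, nsmul_eq_mul]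
    push_cast; ring
  have hlt : ∑ x, 4 * |B x| < ∑ x, (B x ^ 2 + 4) := by
    refine Finset.sum_lt_sum (fun x _ => ?_) ⟨0, Finset.mem_univ _, by simp [B]⟩
    nlinarith [sq_abs (B x), sq_nonneg (|B x| - 2)]
  rw [← Finset.mul_sum, Finset.sum_add_distrib, hsum_sq] at hlt
  simp only [Finset.sum_const, Finset.card_univ, card_V, nsmul_eq_mul] at hlt
  push_cast at hlt
  rw [pow_succ]
  linarith

lemma add_eq_zero_of_hasPEST {S : Finset (V m)} {a b c d : V m} {t : ℝ} (hab : a + b ≠ 0)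
    (hcd : c + d ≠ 0) (h : hasPEST S a b c d t) : a + b + c + d = 0 := by
  by_contra he
  have hlt := sum_abs_chi_combination_lt (w₁ := c + a) (w₂ := d + b) (w₃ := c + b) (w₄ := d + a)
    (fun h => he (by linear_combination h)) (fun h => hab (by linear_combination h - add_self c))
    (fun h => hcd (by linear_combination h - add_self a))
    (fun h => hcd (by linear_combination h - add_self b))
    (fun h => hab (by linear_combination h - add_self d)) (fun h => he (by linear_combination h))
  have hnorm : ‖edgeAmplitude S a b c d t‖ < 1 := by
    rw [edgeAmplitude_eq, norm_mul, norm_inv, norm_pow, RCLike.norm_two,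
      inv_mul_lt_one₀ (by positivity)]
    refine (norm_sum_le _ _).trans_lt ?_
    simp only [norm_mul, norm_exp_ofReal_mul_I, one_mul, norm_intCast]
    exact_mod_cast hlt
  exact hnorm.ne (hasPEST_iff_norm_edgeAmplitude.1 h)

lemma two_mul_card_dotProduct_eq_one {w : V m} (hw : w ≠ 0) :
    2 * #{x | w ⬝ᵥ x = 1} = 2 ^ m := by
  have h : ∑ x, (1 - chi w x) = 2 ^ m := by
    rw [Finset.sum_sub_distrib, sum_chi_of_ne_zero hw, Finset.sum_const, Finset.card_univ, card_V]
    simp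
  simp only [one_sub_chi, ← Finset.sum_filter, Finset.sum_const] at h
  exact_mod_cast (mul_comm _ _).trans h

lemma chi_combination_of_add_eq_zero {a b c d : V m} (he : a + b + c + d = 0) (x : V m) :
    chi (c + a) x + chi (d + b) x - chi (c + b) x - chi (d + a) x =
      if (b + a) ⬝ᵥ x = 1 then 4 * chi (c + a) x else 0 := by
  obtain rfl : a + b + c = d := add_eq_zero_iff_eq.1 he
  have h₁ : a + b + c + b = c + a := by linear_combination add_self b
  have h₂ : c + b = (c + a) + (b + a) := by linear_combination -add_self a
  have h₃ : a + b + c + a = (c + a) + (b + a) := by abel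
  have h := one_sub_chi (b + a) x
  rw [h₁, h₂, h₃, chi_add_left (c + a) (b + a) x]
  split_ifs at h ⊢ <;> linear_combination 2 * chi (c + a) x * h

lemma edgeAmplitude_of_add_eq_zero (S : Finset (V m)) {a b c d : V m} (t : ℝ) (hab : b + a ≠ 0)
    (he : a + b + c + d = 0) :
    edgeAmplitude S a b c d t = (#{x | (b + a) ⬝ᵥ x = 1} : ℂ)⁻¹ *
      ∑ x with (b + a) ⬝ᵥ x = 1, exp (↑(t * lam S x) * I) * chi (c + a) x := by
  have hcard : (2 ^ (m + 1) : ℂ) = 4 * #{x | (b + a) ⬝ᵥ x = 1} := by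
    have h : ((2 ^ m : ℕ) : ℂ) = 2 * #{x | (b + a) ⬝ᵥ x = 1} := by
      exact_mod_cast (two_mul_card_dotProduct_eq_one hab).symm
    push_cast at h
    rw [pow_succ, h]; ring
  rw [edgeAmplitude_eq, hcard, Finset.sum_filter]
  simp only [chi_combination_of_add_eq_zero he, Int.cast_ite, Int.cast_mul, Int.cast_zero, mul_ite,
    mul_zero, Finset.mul_sum]
  refine Finset.sum_congr rfl fun x _ => ?_
  split_ifs
  · field_simp
    push_cast; ring
  · simp

lemma norm_sum_eq_card_iff {ι E : Type*} [NormedAddCommGroup E] [NormedSpace ℝ E]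
    [StrictConvexSpace ℝ E] {s : Finset ι} {z : ι → E} (hz : ∀ i ∈ s, ‖z i‖ = 1) {i₀ : ι}
    (hi₀ : i₀ ∈ s) : ‖∑ i ∈ s, z i‖ = #s ↔ ∀ i ∈ s, z i = z i₀ := by
  refine ⟨fun h i hi => ?_, fun h => ?_⟩
  · by_contra hne
    have hs : (0 : ℝ) < #s := Nat.cast_pos.2 (Finset.card_pos.2 ⟨i₀, hi₀⟩)
    have hlt := norm_sum_lt_of_strictConvexSpace (w := fun _ => (#s : ℝ)⁻¹)
      (fun _ _ => by positivity) (by simp [hs.ne']) hi hi₀ hne (by positivity) (by positivity)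
      (fun i hi => (hz i hi).le)
    rw [← Finset.smul_sum, norm_smul, h, Real.norm_eq_abs, abs_inv, Nat.abs_cast,
      inv_mul_cancel₀ hs.ne'] at hlt
    exact lt_irrefl _ hlt
  · rw [Finset.sum_congr rfl h, Finset.sum_const, RCLike.norm_nsmul ℝ, hz i₀ hi₀, nsmul_eq_mul,
      mul_one]

lemma exp_mul_I_eq_one_iff (θ : ℝ) : exp (θ * I) = 1 ↔ ∃ k : ℤ, θ / π = 2 * k := by
  rw [Complex.exp_eq_one_iff]
  refine exists_congr fun k => ?_
  rw [show (k : ℂ) * (2 * π * I) = ((2 * k * π : ℝ) : ℂ) * I by push_cast; ring,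
    mul_left_inj' I_ne_zero, ofReal_inj, div_eq_iff Real.pi_ne_zero]

lemma exp_mul_I_eq_neg_one_iff (θ : ℝ) : exp (θ * I) = -1 ↔ ∃ k : ℤ, θ / π = 2 * k + 1 := by
  have h : exp (θ * I) = -exp (↑(θ - π) * I) := by
    rw [ofReal_sub, sub_mul, exp_sub, exp_pi_mul_I, div_neg, div_one, neg_neg]
  rw [h, neg_inj, exp_mul_I_eq_one_iff]
  refine exists_congr fun k => ?_
  rw [sub_div, div_self Real.pi_ne_zero, sub_eq_iff_eq_add]

lemma exp_mul_I_mul_chi_eq_iff (w x : V m) (θ θ₀ : ℝ) :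
    exp (θ * I) * chi w x = exp (θ₀ * I) ↔
      (w ⬝ᵥ x = 1 → ∃ k : ℤ, (θ₀ - θ) / π = 2 * k + 1) ∧
        (w ⬝ᵥ x = 0 → ∃ k : ℤ, (θ₀ - θ) / π = 2 * k) := by
  rw [mul_comm, ← eq_div_iff (exp_ne_zero _), ← exp_sub, ← sub_mul, ← ofReal_sub, eq_comm]
  rcases zmod_two_eq_zero_or_eq_one (w ⬝ᵥ x) with h | h
  · rw [chi_of_dotProduct_eq_zero h, Int.cast_one, exp_mul_I_eq_one_iff]
    simp [h]
  · rw [chi_of_dotProduct_eq_one h, Int.cast_neg, Int.cast_one, exp_mul_I_eq_neg_one_iff]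
    simp [h]

lemma hasPEST_iff_of_add_eq_zero {S : Finset (V m)} {a b c d x₀ : V m} {t : ℝ} (hab : b + a ≠ 0)
    (he : a + b + c + d = 0) (hx₀ : (c + a) ⬝ᵥ x₀ = 0 ∧ (b + a) ⬝ᵥ x₀ = 1) :
    hasPEST S a b c d t ↔
      (∀ x, (c + a) ⬝ᵥ x = 1 → (b + a) ⬝ᵥ x = 1 →
        ∃ k : ℤ, t / π * (lam S x₀ - lam S x : ℤ) = 2 * k + 1) ∧
      (∀ y, (c + a) ⬝ᵥ y = 0 → (b + a) ⬝ᵥ y = 1 →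
        ∃ k : ℤ, t / π * (lam S x₀ - lam S y : ℤ) = 2 * k) := by
  have hx₀mem : x₀ ∈ ({x | (b + a) ⬝ᵥ x = 1} : Finset (V m)) :=
    Finset.mem_filter.2 ⟨Finset.mem_univ _, hx₀.2⟩
  have hcard : (#{x | (b + a) ⬝ᵥ x = 1} : ℝ) ≠ 0 :=
    Nat.cast_ne_zero.2 (Finset.card_ne_zero_of_mem hx₀mem)
  have hunit : ∀ x ∈ ({x | (b + a) ⬝ᵥ x = 1} : Finset (V m)),
      ‖exp (↑(t * lam S x) * I) * chi (c + a) x‖ = 1 := fun x _ => by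
    rw [norm_mul, norm_exp_ofReal_mul_I, one_mul, norm_intCast, ← Int.cast_abs, abs_chi,
      Int.cast_one]
  have hphase : ∀ x, (t * lam S x₀ - t * lam S x) / π = t / π * (lam S x₀ - lam S x : ℤ) :=
    fun x => by push_cast; ring
  rw [hasPEST_iff_norm_edgeAmplitude, edgeAmplitude_of_add_eq_zero S t hab he, norm_mul, norm_inv,
    Complex.norm_natCast, inv_mul_eq_one₀ hcard, eq_comm, norm_sum_eq_card_iff hunit hx₀mem,
    chi_of_dotProduct_eq_zero hx₀.1, Int.cast_one, mul_one]
  simp only [Finset.mem_filter, Finset.mem_univ, true_and, exp_mul_I_mul_chi_eq_iff, hphase]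
  exact ⟨fun h => ⟨fun x hc hb => (h x hb).1 hc, fun y hc hb => (h y hb).2 hc⟩,
    fun h x hb => ⟨fun hc => h.1 x hc hb, fun hc => h.2 x hc hb⟩⟩

lemma v2_of_ne_zero {n : ℤ} (hn : n ≠ 0) : v2 n = (padicValInt 2 n : ℤ) := if_neg hn

lemma v2_nonneg (n : ℤ) : 0 ≤ v2 n := by
  unfold v2
  split_ifs
  · exact le_top
  · exact WithTop.coe_nonneg.2 (Int.natCast_nonneg _)

lemma v2_mul (a b : ℤ) : v2 (a * b) = v2 a + v2 b := by
  rcases eq_or_ne a 0 with rfl | ha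
  · simp [v2]
  rcases eq_or_ne b 0 with rfl | hb
  · simp [v2]
  rw [v2_of_ne_zero (mul_ne_zero ha hb), v2_of_ne_zero ha, v2_of_ne_zero hb,
    padicValInt.mul ha hb]
  push_cast; rfl

lemma v2_two : v2 2 = 1 := by
  rw [v2_of_ne_zero two_ne_zero, show (2 : ℤ) = (2 : ℕ) from rfl, padicValInt_self]
  rfl

lemma v2_of_odd {n : ℤ} (hn : Odd n) : v2 n = 0 := by
  rw [v2_of_ne_zero (by rintro rfl; simp at hn), padicValInt.eq_zero_of_not_dvd]
  · rfl
  · exact fun h => Int.not_even_iff_odd.2 hn (even_iff_two_dvd.2 (by exact_mod_cast h))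

lemma natCast_le_v2_iff {n : ℤ} {k : ℕ} : ((k : ℤ) : WithTop ℤ) ≤ v2 n ↔ 2 ^ k ∣ n := by
  rw [show (2 : ℤ) ^ k = (2 : ℕ) ^ k from rfl, padicValInt_dvd_iff]
  unfold v2
  split_ifs with hn <;> simp [hn]

lemma exists_odd_of_v2_eq {n : ℤ} {r : ℕ} (h : v2 n = (r : ℤ)) : ∃ u, Odd u ∧ n = 2 ^ r * u := by
  obtain ⟨u, hu⟩ := natCast_le_v2_iff.1 h.ge
  refine ⟨u, Int.not_even_iff_odd.1 fun ⟨v, hv⟩ => ?_, hu⟩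
  have hle := natCast_le_v2_iff (n := n) (k := r + 1) |>.2 ⟨v, by rw [hu, hv]; ring⟩
  rw [h, WithTop.coe_le_coe] at hle
  omega

lemma exists_v2_of_mul_odd_even {A B : Set ℤ} {s : ℝ}
    (hA : ∀ n ∈ A, ∃ k : ℤ, s * n = 2 * k + 1) (hB : ∀ n ∈ B, ∃ k : ℤ, s * n = 2 * k) :
    ∃ ρ : ℤ, (∀ n ∈ A, v2 n = ρ) ∧ ∀ n ∈ B, ((ρ + 1 : ℤ) : WithTop ℤ) ≤ v2 n := by
  rcases A.eq_empty_or_nonempty with rfl | ⟨n₁, hn₁⟩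
  · exact ⟨-1, by simp, fun n _ => by simpa using v2_nonneg n⟩
  obtain ⟨k₁, hk₁⟩ := hA n₁ hn₁
  have hn₁0 : n₁ ≠ 0 := by
    rintro rfl
    have h : (2 * k₁ + 1 : ℝ) = 0 := by simpa using hk₁.symm
    have : (2 * k₁ + 1 : ℤ) = 0 := by exact_mod_cast h
    omega
  -- `s = (2 k₁ + 1) / n₁`, so multiplying through by `n₁` stays in `ℤ`
  have cross : ∀ n u : ℤ, s * n = u → u * n₁ = (2 * k₁ + 1) * n := fun n u h => by
    have : (u : ℝ) * n₁ = (2 * k₁ + 1) * n := by rw [← h]; linear_combination (n : ℝ) * hk₁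
    exact_mod_cast this
  refine ⟨padicValInt 2 n₁, fun n hn => ?_, fun n hn => ?_⟩
  · obtain ⟨k, hk⟩ := hA n hn
    have h := congrArg v2 (cross n (2 * k + 1) (by push_cast; exact hk))
    rwa [v2_mul, v2_mul, v2_of_odd (odd_two_mul_add_one k), v2_of_odd (odd_two_mul_add_one k₁),
      zero_add, zero_add, v2_of_ne_zero hn₁0, eq_comm] at h
  · obtain ⟨k, hk⟩ := hB n hn
    have h := congrArg v2 (cross n (2 * k) (by push_cast; exact hk))
    rw [v2_mul, v2_mul, v2_mul, v2_two, v2_of_odd (odd_two_mul_add_one k₁), zero_add,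
      v2_of_ne_zero hn₁0] at h
    rw [← h, WithTop.coe_add, WithTop.coe_one, add_comm, add_assoc]
    gcongr
    exact le_add_of_nonneg_left (v2_nonneg k)

lemma exists_pos_mul_odd_even_of_v2 {A B : Set ℤ} {ρ : ℤ} (hA : ∀ n ∈ A, v2 n = ρ)
    (hB : ∀ n ∈ B, ((ρ + 1 : ℤ) : WithTop ℤ) ≤ v2 n) :
    ∃ s : ℝ, 0 < s ∧ (∀ n ∈ A, ∃ k : ℤ, s * n = 2 * k + 1) ∧ ∀ n ∈ B, ∃ k : ℤ, s * n = 2 * k := by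
  rcases A.eq_empty_or_nonempty with rfl | ⟨n₁, hn₁⟩
  · exact ⟨2, two_pos, by simp, fun n _ => ⟨n, by ring⟩⟩
  obtain ⟨r, rfl⟩ := Int.eq_ofNat_of_zero_le (WithTop.coe_nonneg.1 (hA n₁ hn₁ ▸ v2_nonneg n₁))
  refine ⟨(2 ^ r)⁻¹, by positivity, fun n hn => ?_, fun n hn => ?_⟩
  · obtain ⟨u, ⟨k, rfl⟩, rfl⟩ := exists_odd_of_v2_eq (hA n hn)
    exact ⟨k, by push_cast; field_simp⟩
  · obtain ⟨w, rfl⟩ := natCast_le_v2_iff (k := r + 1) |>.1 (by exact_mod_cast hB n hn)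
    exact ⟨w, by push_cast; field_simp; ring⟩

lemma exists_pos_mul_odd_even_iff (A B : Set ℤ) :
    (∃ s : ℝ, 0 < s ∧ (∀ n ∈ A, ∃ k : ℤ, s * n = 2 * k + 1) ∧ ∀ n ∈ B, ∃ k : ℤ, s * n = 2 * k) ↔
      ∃ ρ : ℤ, (∀ n ∈ A, v2 n = ρ) ∧ ∀ n ∈ B, ((ρ + 1 : ℤ) : WithTop ℤ) ≤ v2 n :=
  ⟨fun ⟨_, _, hA, hB⟩ => exists_v2_of_mul_odd_even hA hB,
    fun ⟨_, hA, hB⟩ => exists_pos_mul_odd_even_of_v2 hA hB⟩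

lemma hasPEST_iff {S : Finset (V m)} {a b c d x₀ : V m} {t : ℝ} (hab : a + b ≠ 0)
    (hcd : c + d ≠ 0) (hx₀ : (c + a) ⬝ᵥ x₀ = 0 ∧ (b + a) ⬝ᵥ x₀ = 1) :
    hasPEST S a b c d t ↔ a + b + c + d = 0 ∧
      (∀ x, (c + a) ⬝ᵥ x = 1 → (b + a) ⬝ᵥ x = 1 →
        ∃ k : ℤ, t / π * (lam S x₀ - lam S x : ℤ) = 2 * k + 1) ∧
      (∀ y, (c + a) ⬝ᵥ y = 0 → (b + a) ⬝ᵥ y = 1 →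
        ∃ k : ℤ, t / π * (lam S x₀ - lam S y : ℤ) = 2 * k) := by
  by_cases he : a + b + c + d = 0
  · rw [hasPEST_iff_of_add_eq_zero (by rwa [add_comm]) he hx₀, and_iff_right he]
  · exact iff_of_false (fun h => he (add_eq_zero_of_hasPEST hab hcd h)) fun h => he h.1

end Cubelike

theorem hasPEST_iff_valuation_general {m : ℕ}
    (S : Finset (Fin m → ZMod 2)) (h0 : (0 : Fin m → ZMod 2) ∉ S)
    (a b c d : Fin m → ZMod 2) (hab : a + b ∈ S) (hcd : c + d ∈ S)
    (x₀ : Fin m → ZMod 2) (hx₀ : (c + a) ⬝ᵥ x₀ = 0 ∧ (b + a) ⬝ᵥ x₀ = 1) :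
    (∃ t : ℝ, 0 < t ∧ hasPEST S a b c d t) ↔
      a + b + c + d = 0 ∧
      ∃ ρ : ℤ,
        (∀ x : Fin m → ZMod 2, (c + a) ⬝ᵥ x = 1 → (b + a) ⬝ᵥ x = 1 →
          v2 (lam S x₀ - lam S x) = (ρ : WithTop ℤ)) ∧
        (∀ y : Fin m → ZMod 2, (c + a) ⬝ᵥ y = 0 → (b + a) ⬝ᵥ y = 1 →
          ((ρ + 1 : ℤ) : WithTop ℤ) ≤ v2 (lam S x₀ - lam S y)) := by
  have hvaluation := Cubelike.exists_pos_mul_odd_even_iff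
    ((fun x => lam S x₀ - lam S x) '' {x | (c + a) ⬝ᵥ x = 1 ∧ (b + a) ⬝ᵥ x = 1})
    ((fun y => lam S x₀ - lam S y) '' {y | (c + a) ⬝ᵥ y = 0 ∧ (b + a) ⬝ᵥ y = 1})
  simp only [Set.forall_mem_image, Set.mem_ofPred_eq, and_imp] at hvaluation
  simp only [Cubelike.hasPEST_iff (fun h => h0 (h ▸ hab)) (fun h => h0 (h ▸ hcd)) hx₀]
  constructor
  · rintro ⟨t, ht, he, h⟩
    exact ⟨he, hvaluation.1 ⟨t / Real.pi, div_pos ht Real.pi_pos, h⟩⟩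
  · rintro ⟨he, hρ⟩
    obtain ⟨s, hs, h⟩ := hvaluation.2 hρ
    refine ⟨s * Real.pi, mul_pos hs Real.pi_pos, he, ?_⟩
    rwa [mul_div_cancel_right₀ _ Real.pi_ne_zero]

/-- Main theorem: a cubelike graph has PEST between `(a,b)` and `(c,d)` at some positive
time iff `a+b+c+d = 0` and the 2-adic valuations of `λ_{x₀} - λ_x` are constant on `Ω₋`
and strictly larger on `Ω₊`. -/
theorem hasPEST_iff_valuation {m : ℕ} (hm : 1 ≤ m)
    (S : Finset (Fin m → ZMod 2)) (h0 : (0 : Fin m → ZMod 2) ∉ S)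
    (a b c d : Fin m → ZMod 2) (hab : a + b ∈ S) (hcd : c + d ∈ S)
    (hbc : b ≠ c) (had : a ≠ d)
    (x₀ : Fin m → ZMod 2) (hx₀ : (c + a) ⬝ᵥ x₀ = 0 ∧ (b + a) ⬝ᵥ x₀ = 1) :
    (∃ t : ℝ, 0 < t ∧ hasPEST S a b c d t) ↔
      a + b + c + d = 0 ∧
      ∃ ρ : ℤ,
        (∀ x : Fin m → ZMod 2, (c + a) ⬝ᵥ x = 1 → (b + a) ⬝ᵥ x = 1 →
          v2 (lam S x₀ - lam S x) = (ρ : WithTop ℤ)) ∧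
        (∀ y : Fin m → ZMod 2, (c + a) ⬝ᵥ y = 0 → (b + a) ⬝ᵥ y = 1 →
          ((ρ + 1 : ℤ) : WithTop ℤ) ≤ v2 (lam S x₀ - lam S y)) :=
  hasPEST_iff_valuation_general S h0 a b c d hab hcd x₀ hx₀

end
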